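/- Let G be cyclic of prime order p ≥ 3. Then the omega invariant of ℬ_±(G) satisfies ω(ℬ_±(G)) ≤ p: if U, V₁,…,V_ℓ are atoms of ℬ_±(G) and U divides V₁⋯V_ℓ in ℬ_±(G), then there is a subset I ⊆ [1,ℓ] with |I| ≤ p such that U divides ∏_{i∈I} Vᵢ in ℬ_±(G). -/

import Mathlib

def IsWZS {G : Type*} [AddCommGroup G] (Γ : Set (G →+ G)) (S : Multiset G) : Prop :=
  ∃ T : Multiset (G × (G →+ G)),
    (∀ p ∈ T, p.2 ∈ Γ) ∧ T.map Prod.fst = S ∧ (T.map fun p => p.2 p.1).sum = 0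

def sigmaSet {G : Type*} [AddCommGroup G] (Γ : Set (G →+ G)) (S : Multiset G) : Set G :=
  {x | ∃ T : Multiset (G × (G →+ G)),
    (∀ p ∈ T, p.2 ∈ Γ) ∧ T.map Prod.fst = S ∧ (T.map fun p => p.2 p.1).sum = x}

def pmWeights (G : Type*) [AddCommGroup G] : Set (G →+ G) :=
  {AddMonoidHom.id G, -(AddMonoidHom.id G)}

def autWeights (G : Type*) [AddCommGroup G] : Set (G →+ G) :=
  {f : G →+ G | Function.Bijective ⇑f}

def IsAtomPM {G : Type*} [AddCommGroup G] (S : Multiset G) : Prop :=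
  S ≠ 0 ∧ IsWZS (pmWeights G) S ∧
    ∀ A B : Multiset G, IsWZS (pmWeights G) A → IsWZS (pmWeights G) B →
      A + B = S → A = 0 ∨ B = 0

def LSet {G : Type*} [AddCommGroup G] (B : Multiset G) : Set ℕ :=
  {ℓ | ∃ l : List (Multiset G), (∀ A ∈ l, IsAtomPM A) ∧ l.sum = B ∧ l.length = ℓ}

def BOver {G : Type*} [AddCommGroup G] (Γ : Set (G →+ G)) (G₀ : Set G) : Set (Multiset G) :=
  {S | (∀ g ∈ S, g ∈ G₀) ∧ IsWZS Γ S}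

def IsBasisTuple {G : Type*} [AddCommGroup G] {r : ℕ} (e : Fin r → G) : Prop :=
  (∀ i, e i ≠ 0) ∧
  (∀ m : Fin r → ℤ, (∑ i, m i • e i) = 0 → ∀ i, m i • e i = 0) ∧
  AddSubgroup.closure (Set.range e) = ⊤

/-!
A plus-minus weighted sequence `S` is zero-sum iff `S = A + B` with `σ(A) = σ(B)`, i.e. iff
`2 σ(A) = σ(S)` for some `A ≤ S`. For `p` odd every element of `G` is a double, and by
Cauchy–Davenport the subsums of `p - 1` nonzero elements cover `G`; so every sequence of at least
`p - 1` nonzero elements lies in `ℬ_±(G)`. Consequently atoms other than `0` have length at most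
`p`: otherwise some `a` occurs twice and `{a, a}` splits off.

If `U ∣ V₁ ⋯ V_ℓ` with `ℓ > p`, a factor `Vᵢ = 0` can simply be dropped. Otherwise, as
`|U| ≤ p < ℓ`, some `Vᵢ` is not needed to cover `U`, and the cofactor of `U` in the product of
the others has at least `2 (ℓ - 1) - p ≥ p` nonzero elements, hence is again zero-sum. Dropping
factors one at a time ends with at most `p` of them.
-/

open scoped Pointwise

section
variable {G : Type*} [AddCommGroup G]

theorem exists_add_self_eq_of_coprime_two (h : (Nat.card G).Coprime 2) (s : G) :
    ∃ t : G, t + t = s := by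
  obtain ⟨t, ht⟩ := (nsmulCoprime h).surjective s
  exact ⟨t, by rwa [← two_nsmul]⟩

theorem card_le_minOrder_of_card_prime [Fintype G] (hp : (Fintype.card G).Prime) :
    (Fintype.card G : ℕ∞) ≤ AddMonoid.minOrder G := by
  have := Fact.mk hp
  exact AddMonoid.le_minOrder.2 fun a ha _ => by rw [addOrderOf_eq_prime card_nsmul_eq_zero ha]

variable [DecidableEq G]

def Multiset.subsums (S : Multiset G) : Finset G := (S.powerset.map Multiset.sum).toFinset

theorem Multiset.mem_subsums {S : Multiset G} {x : G} :
    x ∈ S.subsums ↔ ∃ A ≤ S, A.sum = x := by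
  simp [Multiset.subsums]

theorem Multiset.zero_mem_subsums (S : Multiset G) : (0 : G) ∈ S.subsums :=
  Multiset.mem_subsums.2 ⟨0, Multiset.zero_le S, rfl⟩

theorem Multiset.subsums_zero : (0 : Multiset G).subsums = {0} := by
  simp [Multiset.subsums]

theorem Multiset.subsums_cons (g : G) (S : Multiset G) :
    (g ::ₘ S).subsums = S.subsums + {0, g} := by
  ext x
  simp only [Multiset.subsums, Multiset.powerset_cons, Multiset.map_add, Multiset.map_map,
    Multiset.toFinset_add, Finset.mem_union, Multiset.mem_toFinset, Multiset.mem_map,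
    Finset.mem_add, Finset.mem_insert, Finset.mem_singleton]
  simp [add_comm, and_or_left, exists_or]

theorem Multiset.min_le_card_subsums [Fintype G] (hp : (Fintype.card G).Prime) {S : Multiset G}
    (hS : (0 : G) ∉ S) : min (Fintype.card G) (Multiset.card S + 1) ≤ S.subsums.card := by
  induction S using Multiset.induction with
  | empty => simp [Multiset.subsums_zero]
  | cons g S ih =>
    rw [Multiset.mem_cons, not_or] at hS
    have hpair : ({0, g} : Finset G).card = 2 := Finset.card_pair hS.1
    have hCD := (min_le_min_right _ (card_le_minOrder_of_card_prime hp)).trans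
      (cauchy_davenport_minOrder_add ⟨0, S.zero_mem_subsums⟩ (Finset.insert_nonempty 0 {g}))
    rw [hpair, ← Nat.mono_cast.map_min, Nat.cast_le, ← Multiset.subsums_cons] at hCD
    have := ih hS.2
    rw [Multiset.card_cons]
    omega

end

section PlusMinus
variable {G : Type*} [AddCommGroup G]

theorem isWZS_pmWeights_iff {S : Multiset G} :
    IsWZS (pmWeights G) S ↔ ∃ A ≤ S, A.sum + A.sum = S.sum := by
  classical
  constructor
  · rintro ⟨T, hT, rfl, hsum⟩
    set P : G × (G →+ G) → Prop := fun q => q.2 = AddMonoidHom.id G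
    have hplus : ((T.filter P).map fun q => q.2 q.1) = (T.filter P).map Prod.fst :=
      Multiset.map_congr rfl fun q hq => by rw [(Multiset.mem_filter.1 hq).2]; rfl
    have hminus : ((T.filter (¬ P ·)).map fun q => q.2 q.1) =
        ((T.filter (¬ P ·)).map Prod.fst).map Neg.neg := by
      rw [Multiset.map_map]
      refine Multiset.map_congr rfl fun q hq => ?_
      rw [(hT q (Multiset.mem_filter.1 hq).1).resolve_left (Multiset.mem_filter.1 hq).2]; rfl
    refine ⟨(T.filter P).map Prod.fst, Multiset.map_le_map (Multiset.filter_le _ _), ?_⟩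
    have hsplit (f : G × (G →+ G) → G) :
        (T.map f).sum = ((T.filter P).map f).sum + ((T.filter (¬ P ·)).map f).sum := by
      rw [← Multiset.sum_add, ← Multiset.map_add, Multiset.filter_add_not]
    rw [hsplit, hplus, hminus, Multiset.sum_map_neg', ← sub_eq_add_neg, sub_eq_zero] at hsum
    rw [hsplit, ← hsum]
  · rintro ⟨A, hA, hsum⟩
    obtain ⟨B, rfl⟩ := Multiset.le_iff_exists_add.1 hA
    rw [Multiset.sum_add, add_right_inj] at hsum
    refine ⟨A.map (·, AddMonoidHom.id G) + B.map (·, -AddMonoidHom.id G), ?_, ?_, ?_⟩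
    · simp [pmWeights, or_imp, forall_and]
    · simp [Multiset.map_map]
    · simp [Multiset.map_map, Function.comp_def, Multiset.sum_map_neg', hsum]

theorem isWZS_pmWeights_singleton_zero : IsWZS (pmWeights G) {0} :=
  isWZS_pmWeights_iff.2 ⟨0, Multiset.zero_le _, by simp⟩

theorem isWZS_pmWeights_pair (a : G) : IsWZS (pmWeights G) {a, a} :=
  isWZS_pmWeights_iff.2 ⟨{a}, by simp, by simp⟩

theorem isWZS_pmWeights_erase_zero [DecidableEq G] {S : Multiset G}
    (hS : IsWZS (pmWeights G) S) : IsWZS (pmWeights G) (S.erase 0) := by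
  obtain ⟨A, hA, hsum⟩ := isWZS_pmWeights_iff.1 hS
  have sum_erase_zero : ∀ X : Multiset G, (X.erase 0).sum = X.sum := fun X => by
    by_cases h : (0 : G) ∈ X
    · rw [← Multiset.sum_erase h, zero_add]
    · rw [Multiset.erase_of_notMem h]
  exact isWZS_pmWeights_iff.2
    ⟨A.erase 0, Multiset.erase_le_erase 0 hA, by rw [sum_erase_zero, sum_erase_zero, hsum]⟩

theorem isWZS_pmWeights_of_card_sub_one_le [Fintype G] (hp : (Fintype.card G).Prime)
    (h3 : 3 ≤ Fintype.card G) {S : Multiset G} (hS : (0 : G) ∉ S)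
    (hlen : Fintype.card G - 1 ≤ Multiset.card S) : IsWZS (pmWeights G) S := by
  classical
  have hodd : (Nat.card G).Coprime 2 := by
    rw [Nat.card_eq_fintype_card]
    exact (Nat.coprime_primes hp Nat.prime_two).2 (by omega)
  obtain ⟨t, ht⟩ := exists_add_self_eq_of_coprime_two hodd S.sum
  have huniv : S.subsums = Finset.univ := by
    have := S.min_le_card_subsums hp hS
    exact Finset.eq_univ_of_card _ (le_antisymm (Finset.card_le_univ _) (by omega))
  obtain ⟨A, hA, rfl⟩ := Multiset.mem_subsums.1 (huniv ▸ Finset.mem_univ t)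
  exact isWZS_pmWeights_iff.2 ⟨A, hA, ht⟩

end PlusMinus

namespace IsAtomPM
variable {G : Type*} [AddCommGroup G] {S : Multiset G}

theorem eq_singleton_zero_of_zero_mem (hS : IsAtomPM S) (h0 : (0 : G) ∈ S) : S = {0} := by
  classical
  have hsplit : {0} + S.erase 0 = S := by rw [Multiset.singleton_add, Multiset.cons_erase h0]
  rcases hS.2.2 _ _ isWZS_pmWeights_singleton_zero (isWZS_pmWeights_erase_zero hS.2.1) hsplit
    with h | h
  · simp at h
  · rw [← hsplit, h, add_zero]

theorem zero_notMem (hS : IsAtomPM S) (hne : S ≠ {0}) : (0 : G) ∉ S :=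
  fun h0 => hne (hS.eq_singleton_zero_of_zero_mem h0)

theorem two_le_card (hS : IsAtomPM S) (hne : S ≠ {0}) : 2 ≤ Multiset.card S := by
  by_contra! hlt
  obtain ⟨b, rfl⟩ : ∃ b, S = {b} :=
    Multiset.card_eq_one.1 (by have := Multiset.card_pos.2 hS.1; omega)
  have hb : b ≠ 0 := fun h => hne (h ▸ rfl)
  obtain ⟨A, hA, hsum⟩ := isWZS_pmWeights_iff.1 hS.2.1
  rcases Multiset.le_singleton.1 hA with rfl | rfl <;> simp_all [eq_comm]

theorem card_le [Fintype G] (hp : (Fintype.card G).Prime) (h3 : 3 ≤ Fintype.card G)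
    (hS : IsAtomPM S) : Multiset.card S ≤ Fintype.card G := by
  classical
  by_contra! hgt
  have h0 : (0 : G) ∉ S :=
    hS.zero_notMem fun h => by rw [h, Multiset.card_singleton] at hgt; omega
  obtain ⟨a, T, rfl⟩ : ∃ a T, S = a ::ₘ a ::ₘ T := by
    by_contra! hnd
    have := Multiset.toFinset_card_of_nodup (Multiset.nodup_iff_ne_cons_cons.2 hnd)
    have := S.toFinset.card_le_univ
    omega
  simp only [Multiset.card_cons] at hgt
  have hT : IsWZS (pmWeights G) T :=
    isWZS_pmWeights_of_card_sub_one_le hp h3 (fun h => h0 (by simp [h])) (by omega)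
  rcases hS.2.2 {a, a} T (isWZS_pmWeights_pair a) hT (by simp) with h | rfl
  · simp at h
  · simp at hgt; omega

end IsAtomPM

namespace List
variable {α : Type*}

theorem mem_sum_iff_exists_mem {l : List (Multiset α)} {a : α} :
    a ∈ l.sum ↔ ∃ s ∈ l, a ∈ s := by
  rw [← Multiset.sum_coe, ← Multiset.join, Multiset.mem_join]
  simp

theorem length_mul_le_card_sum {l : List (Multiset α)} {n : ℕ}
    (h : ∀ s ∈ l, n ≤ Multiset.card s) : l.length * n ≤ Multiset.card l.sum := by
  induction l with
  | nil => simp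
  | cons s t ih =>
    rw [forall_mem_cons] at h
    rw [length_cons, sum_cons, Multiset.card_add, Nat.succ_mul]
    have := ih h.2
    omega

variable [DecidableEq α]

theorem exists_le_sum_erase {U : Multiset α} {l : List (Multiset α)} (hle : U ≤ l.sum)
    (hlt : Multiset.card U < l.length) : ∃ W ∈ l, U ≤ (l.erase W).sum := by
  induction l generalizing U with
  | nil => simp at hlt
  | cons V t ih =>
    rw [sum_cons] at hle
    by_cases hUt : U ≤ t.sum
    · exact ⟨V, mem_cons_self, by rwa [erase_cons_head]⟩
    have hUV : U - V ≤ t.sum := tsub_le_iff_left.2 hle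
    have hcard : Multiset.card (U - V) < t.length := by
      have hne : U - V ≠ U := fun h => hUt (h ▸ hUV)
      have := Multiset.card_lt_card (lt_of_le_of_ne tsub_le_self hne)
      rw [length_cons] at hlt
      omega
    obtain ⟨W, hW, hle'⟩ := ih hUV hcard
    have hsum : ((V :: t).erase W).sum = V + (t.erase W).sum := by
      apply add_left_cancel (a := W)
      rw [sum_erase (mem_cons_of_mem V hW), sum_cons, ← sum_erase hW, add_left_comm]
    refine ⟨W, mem_cons_of_mem V hW, ?_⟩
    calc U ≤ V + (U - V) := le_add_tsub
      _ ≤ V + (t.erase W).sum := add_le_add_right hle' V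
      _ = ((V :: t).erase W).sum := hsum.symm

theorem exists_subperm_length_le_of_forall_exists_erase (P : List α → Prop) (n : ℕ)
    (step : ∀ l, P l → n < l.length → ∃ a ∈ l, P (l.erase a)) (l : List α) (hl : P l) :
    ∃ l', l'.Subperm l ∧ l'.length ≤ n ∧ P l' := by
  by_cases hlen : l.length ≤ n
  · exact ⟨l, .refl l, hlen, hl⟩
  obtain ⟨a, ha, hPa⟩ := step l hl (by omega)
  obtain ⟨l', hsub, hlen', hP'⟩ :=
    exists_subperm_length_le_of_forall_exists_erase P n step (l.erase a) hPa
  exact ⟨l', hsub.trans erase_sublist.subperm, hlen', hP'⟩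
termination_by l.length
decreasing_by rw [length_erase_of_mem ha]; exact Nat.sub_lt (length_pos_of_mem ha) one_pos

end List

section Divisibility
variable {G : Type*} [AddCommGroup G]

/-- `U` divides `B` in the monoid `ℬ_±(G)`. -/
def DividesPM (U B : Multiset G) : Prop := ∃ C, IsWZS (pmWeights G) C ∧ U + C = B

theorem DividesPM.sum_erase_singleton_zero [DecidableEq G] {U : Multiset G}
    {l : List (Multiset G)} (hU : (0 : G) ∉ U) (h0 : {0} ∈ l) (h : DividesPM U l.sum) :
    DividesPM U (l.erase {0}).sum := by
  obtain ⟨C, hC, hsum⟩ := h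
  have h0C : (0 : G) ∈ C := by
    have : (0 : G) ∈ U + C := by rw [hsum, ← List.sum_erase h0]; simp
    exact (Multiset.mem_add.1 this).resolve_left hU
  refine ⟨C.erase 0, isWZS_pmWeights_erase_zero hC, add_left_cancel (a := {0}) ?_⟩
  rw [List.sum_erase h0, ← hsum, add_left_comm, Multiset.singleton_add, Multiset.cons_erase h0C]

theorem DividesPM.exists_sum_erase_of_forall_ne_zero [DecidableEq G] [Fintype G]
    (hp : (Fintype.card G).Prime) (h3 : 3 ≤ Fintype.card G) {U : Multiset G} (hU : IsAtomPM U)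
    {l : List (Multiset G)} (hl : ∀ A ∈ l, IsAtomPM A ∧ A ≠ {0}) (h : DividesPM U l.sum)
    (hlen : Fintype.card G < l.length) : ∃ W ∈ l, DividesPM U (l.erase W).sum := by
  obtain ⟨C, -, hsum⟩ := h
  have hUp := hU.card_le hp h3
  obtain ⟨W, hW, hUle⟩ :=
    List.exists_le_sum_erase (Multiset.le_iff_exists_add.2 ⟨C, hsum.symm⟩) (by omega)
  refine ⟨W, hW, _ - U, ?_, add_tsub_cancel_of_le hUle⟩
  have hl' : ∀ A ∈ l.erase W, IsAtomPM A ∧ A ≠ {0} :=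
    fun A hA => hl A (List.mem_of_mem_erase hA)
  have h0 : (0 : G) ∉ (l.erase W).sum - U := fun h => by
    obtain ⟨A, hA, h0A⟩ := List.mem_sum_iff_exists_mem.1 (Multiset.mem_of_le tsub_le_self h)
    exact (hl' A hA).1.zero_notMem (hl' A hA).2 h0A
  have hcard : (l.erase W).length * 2 ≤ Multiset.card (l.erase W).sum :=
    List.length_mul_le_card_sum fun A hA => (hl' A hA).1.two_le_card (hl' A hA).2
  apply isWZS_pmWeights_of_card_sub_one_le hp h3 h0
  rw [Multiset.card_sub hUle, List.length_erase_of_mem hW] at *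
  omega

theorem DividesPM.exists_sum_erase [DecidableEq G] [Fintype G] (hp : (Fintype.card G).Prime)
    (h3 : 3 ≤ Fintype.card G) {U : Multiset G} (hU : IsAtomPM U) (hU0 : (0 : G) ∉ U)
    {l : List (Multiset G)} (hl : ∀ A ∈ l, IsAtomPM A) (h : DividesPM U l.sum)
    (hlen : Fintype.card G < l.length) : ∃ W ∈ l, DividesPM U (l.erase W).sum := by
  by_cases h0l : {0} ∈ l
  · exact ⟨{0}, h0l, h.sum_erase_singleton_zero hU0 h0l⟩
  · exact h.exists_sum_erase_of_forall_ne_zero hp h3 hU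
      (fun A hA => ⟨hl A hA, fun h => h0l (h ▸ hA)⟩) hlen

end Divisibility

theorem stmt18 {G : Type*} [AddCommGroup G] [Fintype G]
    (hp : (Fintype.card G).Prime) (h3 : 3 ≤ Fintype.card G)
    (U : Multiset G) (hU : IsAtomPM U)
    (l : List (Multiset G)) (hl : ∀ A ∈ l, IsAtomPM A)
    (hdvd : ∃ C : Multiset G, IsWZS (pmWeights G) C ∧ U + C = l.sum) :
    ∃ l' : List (Multiset G), l'.Subperm l ∧ l'.length ≤ Fintype.card G ∧
      ∃ C : Multiset G, IsWZS (pmWeights G) C ∧ U + C = l'.sum := by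
  classical
  by_cases h0U : (0 : G) ∈ U
  · have hU0 := hU.eq_singleton_zero_of_zero_mem h0U
    obtain ⟨C, -, hsum⟩ := hdvd
    obtain ⟨V, hV, h0V⟩ :=
      List.mem_sum_iff_exists_mem.1 (hsum ▸ Multiset.mem_add.2 (.inl h0U))
    refine ⟨[V], List.singleton_subperm_iff.2 hV, by simp; omega, 0,
      isWZS_pmWeights_iff.2 ⟨0, le_rfl, by simp⟩, ?_⟩
    rw [List.sum_singleton, add_zero, hU0, (hl V hV).eq_singleton_zero_of_zero_mem h0V]
  obtain ⟨l', hsub, hlen, -, hdvd'⟩ := List.exists_subperm_length_le_of_forall_exists_erase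
    (fun l' => (∀ A ∈ l', IsAtomPM A) ∧ DividesPM U l'.sum) (Fintype.card G)
    (fun l' ⟨hl', hdvd'⟩ hlen => (hdvd'.exists_sum_erase hp h3 hU h0U hl' hlen).imp
      fun _ ⟨hW, hdvdW⟩ => ⟨hW, fun A hA => hl' A (List.mem_of_mem_erase hA), hdvdW⟩)
    l ⟨hl, hdvd⟩
  exact ⟨l', hsub, hlen, hdvd'⟩
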